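/- arXiv:1010.2900 — 4 statements merged into one kernel-verified Lean document; each statement's English description precedes it below -/
import Mathlib

section
/- Let A ∈ sp(2(n+1),ℝ) be nonzero with A² = k²·Id for some k > 0. Then A is diagonalizable over ℝ with eigenvalues ±k, the eigenspaces V⁺ and V⁻ are Lagrangian subspaces of (ℝ^{2(n+1)}, Ω), and in particular each has dimension n+1. -/
/-!
Since `A² = k²` and `k ≠ -k`, the factorisation `(A - k)(A + k) = 0` splits the space as
`V⁺ ⊕ V⁻`. For eigenvectors `A x = μ x`, `A y = ν y`, skewness gives `(μ + ν) Ω(x, y) = 0`, so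
`V⁺` and `V⁻` are isotropic. An isotropic subspace of a nondegenerate form has at most half the
dimension of the space, so both summands have dimension exactly `n + 1`; in particular both are
nonzero, i.e. `±k` are eigenvalues.
-/

open Finset

/-- The standard symplectic form on `ℝⁿ × ℝⁿ` (pairing the two factors). -/
noncomputable def stdOmega (n : ℕ) :
    LinearMap.BilinForm ℝ ((Fin n → ℝ) × (Fin n → ℝ)) :=
  LinearMap.mk₂ ℝ (fun x y => ∑ i, (x.1 i * y.2 i - x.2 i * y.1 i))
    (by
      intro x x' y
      simp only [Prod.fst_add, Prod.snd_add, Pi.add_apply]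
      rw [← Finset.sum_add_distrib]
      exact Finset.sum_congr rfl fun i _ => by ring)
    (by
      intro c x y
      simp only [Prod.smul_fst, Prod.smul_snd, Pi.smul_apply, smul_eq_mul]
      rw [Finset.mul_sum]
      exact Finset.sum_congr rfl fun i _ => by ring)
    (by
      intro x y y'
      simp only [Prod.fst_add, Prod.snd_add, Pi.add_apply]
      rw [← Finset.sum_add_distrib]
      exact Finset.sum_congr rfl fun i _ => by ring)
    (by
      intro c x y
      simp only [Prod.smul_fst, Prod.smul_snd, Pi.smul_apply, smul_eq_mul]
      rw [Finset.mul_sum]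
      exact Finset.sum_congr rfl fun i _ => by ring)

open Module

namespace Module.End

variable {K V : Type*} [Field K] [AddCommGroup V] [Module K V]

theorem isCompl_eigenspace_of_sub_mul_sub_eq_zero {A : End K V} {μ ν : K} (hμν : μ ≠ ν)
    (h : (A - μ • 1) * (A - ν • 1) = 0) : IsCompl (A.eigenspace μ) (A.eigenspace ν) := by
  refine ⟨A.disjoint_genEigenspace hμν 1 1,
    codisjoint_iff.mpr <| Submodule.eq_top_iff'.mpr fun x => ?_⟩
  have hcomm : (A - ν • 1) * (A - μ • 1) = (A - μ • 1) * (A - ν • 1) := by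
    ext x
    simp only [mul_apply, LinearMap.sub_apply, LinearMap.smul_apply, one_apply, map_sub, map_smul]
    module
  have h₁ : (A - ν • 1) x ∈ A.eigenspace μ := by
    rw [eigenspace_def, LinearMap.mem_ker, ← mul_apply, h, LinearMap.zero_apply]
  have h₂ : (A - μ • 1) x ∈ A.eigenspace ν := by
    rw [eigenspace_def, LinearMap.mem_ker, ← mul_apply, hcomm, h, LinearMap.zero_apply]
  have hx : x = (μ - ν)⁻¹ • ((A - ν • 1) x - (A - μ • 1) x) := by
    simp only [LinearMap.sub_apply, LinearMap.smul_apply, one_apply, sub_sub_sub_cancel_left,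
      ← sub_smul, smul_smul, inv_mul_cancel₀ (sub_ne_zero.mpr hμν), one_smul]
  rw [hx]
  exact Submodule.smul_mem _ _ (Submodule.sub_mem_sup h₁ h₂)

end Module.End

namespace LinearMap.BilinForm

variable {K V : Type*} [Field K] [AddCommGroup V] [Module K V]

theorem two_mul_finrank_le_of_isotropic [FiniteDimensional K V] {B : LinearMap.BilinForm K V}
    (hB : B.Nondegenerate) {W : Submodule K V} (hW : ∀ x ∈ W, ∀ y ∈ W, B x y = 0) :
    2 * finrank K W ≤ finrank K V := by
  have hle := Submodule.finrank_mono (show W ≤ B.orthogonal W from fun y hy x hx => hW x hx y hy)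
  rw [finrank_orthogonal hB] at hle
  have := Submodule.finrank_le W
  omega

theorem two_mul_finrank_eq_of_isCompl_of_isotropic [FiniteDimensional K V]
    {B : LinearMap.BilinForm K V} (hB : B.Nondegenerate) {P Q : Submodule K V} (hPQ : IsCompl P Q)
    (hP : ∀ x ∈ P, ∀ y ∈ P, B x y = 0) (hQ : ∀ x ∈ Q, ∀ y ∈ Q, B x y = 0) :
    2 * finrank K P = finrank K V := by
  have hdim := Submodule.finrank_add_eq_of_isCompl hPQ
  have hle_P := two_mul_finrank_le_of_isotropic hB hP
  have hle_Q := two_mul_finrank_le_of_isotropic hB hQ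
  omega

theorem eq_zero_of_mem_eigenspace {B : LinearMap.BilinForm K V} {A : End K V}
    (hA : ∀ x y, B (A x) y + B x (A y) = 0) {μ ν : K} (hμν : μ + ν ≠ 0) {x y : V}
    (hx : x ∈ A.eigenspace μ) (hy : y ∈ A.eigenspace ν) : B x y = 0 := by
  have h := hA x y
  rw [End.mem_eigenspace_iff.mp hx, End.mem_eigenspace_iff.mp hy, map_smul, map_smul,
    LinearMap.smul_apply, smul_eq_mul, smul_eq_mul, ← add_mul] at h
  exact (mul_eq_zero.mp h).resolve_left hμν

end LinearMap.BilinForm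

theorem stdOmega_apply_self (n : ℕ) (x : (Fin n → ℝ) × (Fin n → ℝ)) : stdOmega n x x = 0 := by
  simp [stdOmega, mul_comm]

theorem stdOmega_separatingLeft (n : ℕ) : (stdOmega n).SeparatingLeft := by
  intro x hx
  ext i
  · simpa [stdOmega, Pi.single_apply] using hx (0, Pi.single i 1)
  · simpa [stdOmega, Pi.single_apply] using hx (Pi.single i 1, 0)

theorem stdOmega_nondegenerate (n : ℕ) : (stdOmega n).Nondegenerate :=
  (LinearMap.IsRefl.nondegenerate_iff_separatingLeft
    (LinearMap.IsAlt.isRefl (stdOmega_apply_self n))).mpr (stdOmega_separatingLeft n)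

theorem finrank_symplecticSpace (n : ℕ) : finrank ℝ ((Fin n → ℝ) × (Fin n → ℝ)) = 2 * n := by
  rw [finrank_prod, finrank_fin_fun, two_mul]

theorem sp_square_positive_eigenspaces_lagrangian_general
    (n : ℕ) (k : ℝ) (hk : 0 < k)
    (A : ((Fin (n + 1) → ℝ) × (Fin (n + 1) → ℝ)) →ₗ[ℝ]
         ((Fin (n + 1) → ℝ) × (Fin (n + 1) → ℝ)))
    (hsp : ∀ x y, stdOmega (n + 1) (A x) y + stdOmega (n + 1) x (A y) = 0)
    (hA2 : A ∘ₗ A = (k ^ 2) • LinearMap.id) :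
    Module.End.HasEigenvalue A k ∧ Module.End.HasEigenvalue A (-k) ∧
    IsCompl (LinearMap.ker (A - k • LinearMap.id)) (LinearMap.ker (A + k • LinearMap.id)) ∧
    (∀ x ∈ LinearMap.ker (A - k • LinearMap.id), ∀ y ∈ LinearMap.ker (A - k • LinearMap.id),
      stdOmega (n + 1) x y = 0) ∧
    (∀ x ∈ LinearMap.ker (A + k • LinearMap.id), ∀ y ∈ LinearMap.ker (A + k • LinearMap.id),
      stdOmega (n + 1) x y = 0) ∧
    Module.finrank ℝ (LinearMap.ker (A - k • LinearMap.id)) = n + 1 ∧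
    Module.finrank ℝ (LinearMap.ker (A + k • LinearMap.id)) = n + 1 := by
  have hker_sub : LinearMap.ker (A - k • LinearMap.id) = End.eigenspace A k :=
    End.eigenspace_def.symm
  have hker_add : LinearMap.ker (A + k • LinearMap.id) = End.eigenspace A (-k) := by
    ext x
    simp [add_eq_zero_iff_eq_neg]
  have hfactor : (A - k • 1) * (A - (-k) • 1) = 0 := LinearMap.ext fun x => by
    have hx : A (A x) = k ^ 2 • x := LinearMap.congr_fun hA2 x
    simp only [End.mul_apply, LinearMap.sub_apply, LinearMap.smul_apply, End.one_apply, neg_smul,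
      sub_neg_eq_add, map_add, hx, map_smul, LinearMap.zero_apply]
    module
  have hcompl := End.isCompl_eigenspace_of_sub_mul_sub_eq_zero (by linarith) hfactor
  have hiso_k : ∀ x ∈ End.eigenspace A k, ∀ y ∈ End.eigenspace A k, stdOmega (n + 1) x y = 0 :=
    fun x hx y hy => LinearMap.BilinForm.eq_zero_of_mem_eigenspace hsp (by linarith) hx hy
  have hiso_neg_k : ∀ x ∈ End.eigenspace A (-k), ∀ y ∈ End.eigenspace A (-k),
      stdOmega (n + 1) x y = 0 :=
    fun x hx y hy => LinearMap.BilinForm.eq_zero_of_mem_eigenspace hsp (by linarith) hx hy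
  have hdim_k := LinearMap.BilinForm.two_mul_finrank_eq_of_isCompl_of_isotropic
    (stdOmega_nondegenerate _) hcompl hiso_k hiso_neg_k
  have hdim_neg_k := LinearMap.BilinForm.two_mul_finrank_eq_of_isCompl_of_isotropic
    (stdOmega_nondegenerate _) hcompl.symm hiso_neg_k hiso_k
  rw [finrank_symplecticSpace, mul_right_inj' two_ne_zero] at hdim_k hdim_neg_k
  rw [hker_sub, hker_add]
  refine ⟨End.hasEigenvalue_iff.mpr fun h => ?_, End.hasEigenvalue_iff.mpr fun h => ?_,
    hcompl, hiso_k, hiso_neg_k, hdim_k, hdim_neg_k⟩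
  · rw [h, finrank_bot] at hdim_k; omega
  · rw [h, finrank_bot] at hdim_neg_k; omega

/-- If `A ∈ sp(2(n+1),ℝ)` is nonzero with `A² = k²·Id`, `k > 0`, then `A` is
diagonalizable over `ℝ` with eigenvalues `±k`: the eigenspaces `V⁺`, `V⁻` are complementary, and
each is a Lagrangian subspace of the standard symplectic space (isotropic of dimension `n+1`). -/
theorem sp_square_positive_eigenspaces_lagrangian
    (n : ℕ) (k : ℝ) (hk : 0 < k)
    (A : ((Fin (n + 1) → ℝ) × (Fin (n + 1) → ℝ)) →ₗ[ℝ]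
         ((Fin (n + 1) → ℝ) × (Fin (n + 1) → ℝ)))
    (hA : A ≠ 0)
    (hsp : ∀ x y, stdOmega (n + 1) (A x) y + stdOmega (n + 1) x (A y) = 0)
    (hA2 : A ∘ₗ A = (k ^ 2) • LinearMap.id) :
    Module.End.HasEigenvalue A k ∧ Module.End.HasEigenvalue A (-k) ∧
    IsCompl (LinearMap.ker (A - k • LinearMap.id)) (LinearMap.ker (A + k • LinearMap.id)) ∧
    (∀ x ∈ LinearMap.ker (A - k • LinearMap.id), ∀ y ∈ LinearMap.ker (A - k • LinearMap.id),
      stdOmega (n + 1) x y = 0) ∧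
    (∀ x ∈ LinearMap.ker (A + k • LinearMap.id), ∀ y ∈ LinearMap.ker (A + k • LinearMap.id),
      stdOmega (n + 1) x y = 0) ∧
    Module.finrank ℝ (LinearMap.ker (A - k • LinearMap.id)) = n + 1 ∧
    Module.finrank ℝ (LinearMap.ker (A + k • LinearMap.id)) = n + 1 :=
  sp_square_positive_eigenspaces_lagrangian_general n k hk A hsp hA2
end

section
/- Let A ∈ sp(2(n+1),ℝ) with A ≠ 0, A² = μ·Id, Σ_A ≠ ∅, and let G₁ = {g ∈ Sp(2(n+1),ℝ) : gA = Ag}. If B ∈ G₁ has the property that for every x ∈ Σ_A there is t_x ∈ ℝ with Bx = exp(t_x A)x, then B = exp(τA) for some τ ∈ ℝ. -/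
open Matrix

/-- The standard symplectic matrix `J` on `ℝ^{n} ⊕ ℝ^{n}`. -/
def stdJ (n : ℕ) : Matrix (Fin n ⊕ Fin n) (Fin n ⊕ Fin n) ℝ :=
  Matrix.fromBlocks 0 1 (-1) 0

/-- The standard symplectic form on `ℝ^{n} ⊕ ℝ^{n}`, `Ω(x,y) = ⟨x, J y⟩`. -/
def stdOm (n : ℕ) (x y : Fin n ⊕ Fin n → ℝ) : ℝ :=
  x ⬝ᵥ (stdJ n *ᵥ y)

/-!
Write `Q x = Ω(x, A x)`. Since `A² = μ`, every `exp (t A)` lies in `span {1, A}`, so on `Σ_A`, and by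
scaling on the open cone `{Q > 0}`, `B` acts as `B x = a x + b A x` with coefficients depending on `x`.
As `B` preserves `Q`, each coefficient pair has norm `a² - μ b² = 1`; as `B` preserves `Ω`, two points
`x, y` with `Ω(x, A y) ≠ 0` have the same coefficients. Any two points of the cone are linked in this
way, directly or through their sum, so the coefficients are constant on the cone. Every line through
a point of the cone meets it in more points, so `B = a + b A` everywhere, and `B` is the exponential
taken at a point of `Σ_A`.
-/

open Filter Topology

theorem exists_exp_smul_eq_smul_one_add_smul {𝔸 : Type*} [Ring 𝔸] [Algebra ℝ 𝔸]
    [TopologicalSpace 𝔸] [IsTopologicalRing 𝔸] [ContinuousSMul ℝ 𝔸] [T2Space 𝔸]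
    {μ : ℝ} {a : 𝔸} (ha : a * a = μ • 1) (t : ℝ) :
    ∃ f g : ℝ, NormedSpace.exp (t • a) = f • 1 + g • a := by
  set S := Submodule.span ℝ {(1 : 𝔸), a}
  have hmul : ∀ x ∈ S, a * x ∈ S := by
    intro x hx
    obtain ⟨c, d, rfl⟩ := Submodule.mem_span_pair.mp hx
    rw [mul_add, mul_smul_comm, mul_smul_comm, mul_one, ha, smul_smul]
    exact Submodule.mem_span_pair.mpr ⟨d * μ, c, add_comm _ _⟩
  have hpow (k : ℕ) : a ^ k ∈ S := by
    induction k with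
    | zero => exact Submodule.subset_span (by simp)
    | succ k ih => rw [pow_succ']; exact hmul _ ih
  have : FiniteDimensional ℝ S := FiniteDimensional.span_of_finite ℝ (Set.toFinite _)
  have hexp : NormedSpace.exp (t • a) ∈ S := by
    rw [NormedSpace.exp_eq_tsum ℝ]
    exact tsum_mem S.closed_of_finiteDimensional fun k => by
      rw [smul_pow]; exact S.smul_mem _ (S.smul_mem _ (hpow k))
  obtain ⟨f, g, hfg⟩ := Submodule.mem_span_pair.mp hexp
  exact ⟨f, g, hfg.symm⟩

section

variable {V : Type*} [AddCommGroup V] [Module ℝ V] {ω : LinearMap.BilinForm ℝ V}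
  {A B : Module.End ℝ V} {μ : ℝ}

theorem apply_smul_add_smul_apply (hA2 : ∀ x, A (A x) = μ • x) (a b : ℝ) (x : V) :
    A (a • x + b • A x) = (b * μ) • x + a • A x := by
  rw [map_add, map_smul, map_smul, hA2, smul_smul, add_comm]

theorem form_smul_add_smul_apply (hA : ∀ x y, ω (A x) y = -ω x (A y))
    (hA2 : ∀ x, A (A x) = μ • x) (p q r s : ℝ) (x y : V) :
    ω (p • x + q • A x) (r • y + s • A y)
      = (p * r - μ * q * s) * ω x y + (p * s - q * r) * ω x (A y) := by
  simp only [map_add, map_smul, LinearMap.add_apply, LinearMap.smul_apply, smul_eq_mul, hA,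
    hA2]
  ring

theorem form_add_smul_apply_add_smul (x v : V) (s : ℝ) :
    ω (x + s • v) (A (x + s • v))
      = ω x (A x) + s * (ω x (A v) + ω v (A x)) + s ^ 2 * ω v (A v) := by
  simp only [map_add, map_smul, LinearMap.add_apply, LinearMap.smul_apply, smul_eq_mul]
  ring

theorem exists_apply_eq_smul_add_smul_of_pos
    (hfix : ∀ x, ω x (A x) = 1 → ∃ a b : ℝ, B x = a • x + b • A x) {x : V}
    (hx : 0 < ω x (A x)) : ∃ a b : ℝ, B x = a • x + b • A x := by
  set c := √(ω x (A x))
  have hc : c ≠ 0 := (Real.sqrt_pos.mpr hx).ne'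
  obtain ⟨a, b, h⟩ := hfix (c⁻¹ • x) (by
    simp only [map_smul, LinearMap.smul_apply, smul_eq_mul]
    rw [← mul_assoc, ← mul_inv, ← sq, Real.sq_sqrt hx.le, inv_mul_cancel₀ hx.ne'])
  rw [map_smul, map_smul, smul_comm a, smul_comm b, ← smul_add] at h
  exact ⟨a, b, smul_right_injective V (inv_ne_zero hc) h⟩

variable (hA : ∀ x y, ω (A x) y = -ω x (A y)) (hA2 : ∀ x, A (A x) = μ • x)
  (hB : ∀ x y, ω (B x) (B y) = ω x y) (hBA : ∀ x, B (A x) = A (B x))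
include hA hA2 hB hBA

theorem sq_sub_mul_sq_eq_one {x : V} {a b : ℝ} (hx : ω x (A x) ≠ 0)
    (hBx : B x = a • x + b • A x) : a ^ 2 - μ * b ^ 2 = 1 := by
  have h := hB x (A x)
  rw [hBA, hBx, apply_smul_add_smul_apply hA2, form_smul_add_smul_apply hA hA2] at h
  refine mul_right_cancel₀ hx ?_
  linear_combination h

theorem coeff_eq_of_form_ne_zero {x y : V} {a b a' b' : ℝ}
    (hBx : B x = a • x + b • A x) (hBy : B y = a' • y + b' • A y)
    (hab : a ^ 2 - μ * b ^ 2 = 1) (hab' : a' ^ 2 - μ * b' ^ 2 = 1)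
    (hxy : ω x (A y) ≠ 0) : a = a' ∧ b = b' := by
  -- With `P + R A = (a - b A)(a' + b' A)`, which has norm `P² - μ R² = 1`, the equations
  -- `E1`, `E2` say `Ω(x, (P + R A - 1) y) = Ω(x, (P + R A - 1) A y) = 0`.
  have E1 := hB x y
  have E2 := hB x (A y)
  rw [hBx, hBy, form_smul_add_smul_apply hA hA2] at E1
  rw [hBA, hBx, hBy, apply_smul_add_smul_apply hA2, form_smul_add_smul_apply hA hA2] at E2
  set u := ω x y
  set v := ω x (A y)
  have hN : (a * a' - μ * b * b') ^ 2 - μ * (a * b' - b * a') ^ 2 = 1 := by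
    linear_combination (a' ^ 2 - μ * b' ^ 2) * hab + hab'
  have hP : a * a' - μ * b * b' = 1 := by
    have h : (a * a' - μ * b * b' - 1) * v = 0 := by
      linear_combination (-1 / 2 : ℝ) * ((a * a' - μ * b * b' - 1) * E2
        - μ * (a * b' - b * a') * E1 - v * hN)
    exact sub_eq_zero.mp ((mul_eq_zero.mp h).resolve_right hxy)
  have hR : a * b' - b * a' = 0 := by
    refine (mul_eq_zero.mp (?_ : (a * b' - b * a') * v = 0)).resolve_right hxy
    linear_combination E1 - u * hP
  constructor
  · linear_combination a' * hab - a * hP - μ * b * hR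
  · linear_combination b' * hab - b * hP - a * hR

theorem coeff_eq_of_pos
    (hfix : ∀ x, ω x (A x) = 1 → ∃ a b : ℝ, B x = a • x + b • A x) {x z : V} {a b a' b' : ℝ}
    (hx : 0 < ω x (A x)) (hz : 0 < ω z (A z))
    (hBx : B x = a • x + b • A x) (hBz : B z = a' • z + b' • A z) : a = a' ∧ b = b' := by
  have hab := sq_sub_mul_sq_eq_one hA hA2 hB hBA hx.ne' hBx
  have hab' := sq_sub_mul_sq_eq_one hA hA2 hB hBA hz.ne' hBz
  by_cases hxz : ω x (A z) = 0
  · by_cases hzx : ω z (A x) = 0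
    · have hy : 0 < ω (x + z) (A (x + z)) := by
        simpa [hxz, hzx] using add_pos hx hz
      obtain ⟨c, d, hBy⟩ := exists_apply_eq_smul_add_smul_of_pos hfix hy
      have hcd := sq_sub_mul_sq_eq_one hA hA2 hB hBA hy.ne' hBy
      obtain ⟨rfl, rfl⟩ := coeff_eq_of_form_ne_zero hA hA2 hB hBA hBx hBy hab hcd
        (by simpa [hxz] using hx.ne')
      exact (coeff_eq_of_form_ne_zero hA hA2 hB hBA hBz hBy hab' hcd
        (by simpa [hzx] using hz.ne')).imp Eq.symm Eq.symm
    · exact (coeff_eq_of_form_ne_zero hA hA2 hB hBA hBz hBx hab' hab hzx).imp Eq.symm Eq.symm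
  · exact coeff_eq_of_form_ne_zero hA hA2 hB hBA hBx hBz hab hab' hxz

theorem apply_eq_smul_add_smul
    (hfix : ∀ x, ω x (A x) = 1 → ∃ a b : ℝ, B x = a • x + b • A x) {x₀ : V} {a b : ℝ}
    (hx₀ : 0 < ω x₀ (A x₀)) (hBx₀ : B x₀ = a • x₀ + b • A x₀) (v : V) :
    B v = a • v + b • A v := by
  obtain ⟨s, hs, hpos⟩ : ∃ s : ℝ, s ≠ 0 ∧ 0 < ω (x₀ + s • v) (A (x₀ + s • v)) := by
    simp only [form_add_smul_apply_add_smul]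
    have hcont : Continuous fun s : ℝ =>
        ω x₀ (A x₀) + s * (ω x₀ (A v) + ω v (A x₀)) + s ^ 2 * ω v (A v) := by
      fun_prop
    have hev := (hcont.tendsto 0).eventually_const_lt (by simpa using hx₀)
    exact ((hev.filter_mono nhdsWithin_le_nhds).and
      (self_mem_nhdsWithin : {0}ᶜ ∈ 𝓝[≠] (0 : ℝ))).exists.imp fun s hs => ⟨hs.2, hs.1⟩
  obtain ⟨c, d, hBy⟩ := exists_apply_eq_smul_add_smul_of_pos hfix hpos
  obtain ⟨rfl, rfl⟩ := coeff_eq_of_pos hA hA2 hB hBA hfix hx₀ hpos hBx₀ hBy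
  rw [map_add, map_smul, map_add, map_smul, hBx₀] at hBy
  refine smul_right_injective V hs (add_left_cancel (hBy.trans ?_))
  module

end

theorem kernel_of_alpha_is_exp_tA_general
    (n : ℕ) (μ : ℝ)
    (A B : Matrix (Fin (n + 1) ⊕ Fin (n + 1)) (Fin (n + 1) ⊕ Fin (n + 1)) ℝ)
    (hsp : ∀ x y, stdOm (n + 1) (A *ᵥ x) y + stdOm (n + 1) x (A *ᵥ y) = 0)
    (hA2 : A * A = μ • (1 : Matrix _ _ ℝ))
    (hSig : ∃ x, stdOm (n + 1) x (A *ᵥ x) = 1)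
    (hBsymp : ∀ x y, stdOm (n + 1) (B *ᵥ x) (B *ᵥ y) = stdOm (n + 1) x y)
    (hBA : B * A = A * B)
    (hfix : ∀ x, stdOm (n + 1) x (A *ᵥ x) = 1 →
      ∃ t : ℝ, B *ᵥ x = NormedSpace.exp (t • A) *ᵥ x) :
    ∃ τ : ℝ, B = NormedSpace.exp (τ • A) := by
  have hexp (t : ℝ) : ∃ f g : ℝ, ∀ x, NormedSpace.exp (t • A) *ᵥ x = f • x + g • (A *ᵥ x) := by
    obtain ⟨f, g, hfg⟩ := exists_exp_smul_eq_smul_one_add_smul hA2 t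
    exact ⟨f, g, fun x => by rw [hfg, add_mulVec, smul_mulVec, smul_mulVec, one_mulVec]⟩
  obtain ⟨x₀, hx₀⟩ := hSig
  obtain ⟨τ, hτ⟩ := hfix x₀ hx₀
  obtain ⟨f, g, hfg⟩ := hexp τ
  refine ⟨τ, toLin'.injective (LinearMap.ext fun v => ?_)⟩
  simp only [toLin'_apply, hfg]
  have hω (x y) : toBilin' (stdJ (n + 1)) x y = stdOm (n + 1) x y := toBilin'_apply' _ x y
  refine apply_eq_smul_add_smul (ω := toBilin' (stdJ (n + 1))) (A := toLin' A) (B := toLin' B)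
    (μ := μ) ?_ ?_ ?_ ?_ ?_ (x₀ := x₀) ?_ ?_ v <;> simp only [hω, toLin'_apply]
  · exact fun x y => eq_neg_of_add_eq_zero_left (hsp x y)
  · intro x; rw [mulVec_mulVec, hA2, smul_mulVec, one_mulVec]
  · exact hBsymp
  · intro x; rw [mulVec_mulVec, mulVec_mulVec, hBA]
  · intro x hx
    obtain ⟨t, ht⟩ := hfix x hx
    obtain ⟨f', g', hfg'⟩ := hexp t
    exact ⟨f', g', ht.trans (hfg' x)⟩
  · exact hx₀ ▸ one_pos
  · exact hτ.trans (hfg x₀)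

/-- Let `A ∈ sp(2(n+1),ℝ)`, `A ≠ 0`, `A² = μ·Id`, `Σ_A ≠ ∅`, and let
`B ∈ Sp(2(n+1),ℝ)` commute with `A`.  If for every `x ∈ Σ_A` there is `t_x ∈ ℝ` with
`Bx = exp(t_x A)x`, then `B = exp(τA)` for some `τ ∈ ℝ`. -/
theorem kernel_of_alpha_is_exp_tA
    (n : ℕ) (μ : ℝ)
    (A B : Matrix (Fin (n + 1) ⊕ Fin (n + 1)) (Fin (n + 1) ⊕ Fin (n + 1)) ℝ)
    (hA : A ≠ 0)
    (hsp : ∀ x y, stdOm (n + 1) (A *ᵥ x) y + stdOm (n + 1) x (A *ᵥ y) = 0)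
    (hA2 : A * A = μ • (1 : Matrix _ _ ℝ))
    (hSig : ∃ x, stdOm (n + 1) x (A *ᵥ x) = 1)
    (hBsymp : ∀ x y, stdOm (n + 1) (B *ᵥ x) (B *ᵥ y) = stdOm (n + 1) x y)
    (hBA : B * A = A * B)
    (hfix : ∀ x, stdOm (n + 1) x (A *ᵥ x) = 1 →
      ∃ t : ℝ, B *ᵥ x = NormedSpace.exp (t • A) *ᵥ x) :
    ∃ τ : ℝ, B = NormedSpace.exp (τ • A) :=
  kernel_of_alpha_is_exp_tA_general n μ A B hsp hA2 hSig hBsymp hBA hfix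
end

section
/- For x ∈ Σ_A = {y : Ω(y,Ay)=1}, define S_x(y) = -y + 2Ω(y,Ax)x - 2Ω(y,x)Ax. Then S_x is a symplectic linear map (S_x ∈ Sp(2(n+1),ℝ)), S_x² = Id, S_x commutes with A, S_x(x) = x, and S_x preserves Σ_A. -/
/-!
Only two facts about `Ω` matter: it is alternating, and `Ω(x, Ax) = 1`. Then the pairings of `x`
and `Ax` with each other are `0, 1, -1, 0`, so `S_x` leaves `Ω(·, x)` and `Ω(·, Ax)` unchanged,
which makes it an involution and a symplectic map. Skew-adjointness of `A` with `A² = μ` gives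
`S_x A = A S_x`, and `Σ_A` is preserved since `Ω(S y, A S y) = Ω(S y, S A y) = Ω(y, A y)`.
-/

open Finset

theorem stdOmega_isAlt (n : ℕ) : (stdOmega n).IsAlt := by
  intro x
  simp [stdOmega, mul_comm]

namespace LinearMap.BilinForm

variable {R M : Type*} [CommRing R] [AddCommGroup M] [Module R M]

def symmetryMap (B : LinearMap.BilinForm R M) (A : M →ₗ[R] M) (x y : M) : M :=
  -y + (2 * B y (A x)) • x - (2 * B y x) • A x

variable {B : LinearMap.BilinForm R M} {A : M →ₗ[R] M} {x : M}

theorem symmetryMap_apply_left (y z : M) :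
    B (symmetryMap B A x y) z = -B y z + 2 * B y (A x) * B x z - 2 * B y x * B (A x) z := by
  simp only [symmetryMap, map_add, map_sub, map_neg, map_smul, LinearMap.add_apply,
    LinearMap.sub_apply, LinearMap.neg_apply, LinearMap.smul_apply, smul_eq_mul]

theorem symmetryMap_self (hB : B.IsAlt) (hx : B x (A x) = 1) : symmetryMap B A x x = x := by
  simp only [symmetryMap, hx, hB.self_eq_zero]
  module

section

variable (hB : B.IsAlt) (hx : B x (A x) = 1)
include hB hx

theorem symmetryMap_apply_left_self (y : M) : B (symmetryMap B A x y) x = B y x := by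
  rw [symmetryMap_apply_left, hB.self_eq_zero, ← hB.neg_eq x (A x), hx]
  ring

theorem symmetryMap_apply_left_map_self (y : M) :
    B (symmetryMap B A x y) (A x) = B y (A x) := by
  rw [symmetryMap_apply_left, hB.self_eq_zero, hx]
  ring

theorem symmetryMap_symmetryMap (y : M) : symmetryMap B A x (symmetryMap B A x y) = y := by
  conv_lhs => rw [symmetryMap, symmetryMap_apply_left_self hB hx,
    symmetryMap_apply_left_map_self hB hx]
  simp only [symmetryMap]
  module

theorem apply_symmetryMap_symmetryMap (y z : M) :
    B (symmetryMap B A x y) (symmetryMap B A x z) = B y z := by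
  simp only [symmetryMap, map_add, map_sub, map_neg, map_smul, LinearMap.add_apply,
    LinearMap.sub_apply, LinearMap.neg_apply, LinearMap.smul_apply, smul_eq_mul, hB.self_eq_zero,
    hx, ← hB.neg_eq z, ← hB.neg_eq x (A x)]
  ring

end

theorem symmetryMap_map {μ : R} (hA : ∀ a b : M, B (A a) b + B a (A b) = 0)
    (hA2 : A ∘ₗ A = μ • LinearMap.id) (y : M) :
    symmetryMap B A x (A y) = A (symmetryMap B A x y) := by
  have hAA (v : M) : A (A v) = μ • v := by simpa using LinearMap.congr_fun hA2 v
  have hyAx : B (A y) (A x) = -(μ * B y x) := by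
    rw [eq_neg_of_add_eq_zero_left (hA y (A x)), hAA, map_smul, smul_eq_mul]
  have hyx : B (A y) x = -B y (A x) := eq_neg_of_add_eq_zero_left (hA y x)
  simp only [symmetryMap, hyAx, hyx, map_add, map_sub, map_neg, map_smul, hAA]
  module

theorem apply_symmetryMap_map_symmetryMap {μ : R} (hB : B.IsAlt) (hx : B x (A x) = 1)
    (hA : ∀ a b : M, B (A a) b + B a (A b) = 0) (hA2 : A ∘ₗ A = μ • LinearMap.id) (y : M) :
    B (symmetryMap B A x y) (A (symmetryMap B A x y)) = B y (A y) := by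
  rw [← symmetryMap_map hA hA2, apply_symmetryMap_symmetryMap hB hx]

end LinearMap.BilinForm

/-- For `x ∈ Σ_A = {y : Ω(y,Ay) = 1}`, the map
`S_x(y) = -y + 2Ω(y,Ax)·x - 2Ω(y,x)·Ax` is symplectic, involutive, commutes with `A`, fixes `x`,
and preserves `Σ_A`. -/
theorem symmetry_Sx_properties
    (n : ℕ) (μ : ℝ)
    (A : ((Fin (n + 1) → ℝ) × (Fin (n + 1) → ℝ)) →ₗ[ℝ]
         ((Fin (n + 1) → ℝ) × (Fin (n + 1) → ℝ)))
    (hsp : ∀ x y, stdOmega (n + 1) (A x) y + stdOmega (n + 1) x (A y) = 0)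
    (hA2 : A ∘ₗ A = μ • LinearMap.id)
    (x : (Fin (n + 1) → ℝ) × (Fin (n + 1) → ℝ))
    (hx : stdOmega (n + 1) x (A x) = 1) :
    let S : ((Fin (n + 1) → ℝ) × (Fin (n + 1) → ℝ)) → ((Fin (n + 1) → ℝ) × (Fin (n + 1) → ℝ)) :=
      fun y => -y + (2 * stdOmega (n + 1) y (A x)) • x - (2 * stdOmega (n + 1) y x) • (A x)
    (∀ y z, stdOmega (n + 1) (S y) (S z) = stdOmega (n + 1) y z) ∧
    (∀ y, S (S y) = y) ∧
    (∀ y, S (A y) = A (S y)) ∧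
    S x = x ∧
    (∀ y, stdOmega (n + 1) y (A y) = 1 → stdOmega (n + 1) (S y) (A (S y)) = 1) := by
  have hB := stdOmega_isAlt (n + 1)
  open LinearMap.BilinForm in
  exact ⟨apply_symmetryMap_symmetryMap hB hx, symmetryMap_symmetryMap hB hx,
    symmetryMap_map hsp hA2, symmetryMap_self hB hx,
    fun y hy => (apply_symmetryMap_map_symmetryMap hB hx hsp hA2 y).trans hy⟩
end

section
/- Let G be a connected semisimple Lie group with Iwasawa decomposition G = KAN and let φ: a → m be a homomorphism into the centralizer m of a in k. Let A_φ be the analytic subgroup with Lie algebra a_φ = {X+φ(X) : X ∈ a}. Then every g ∈ G factors uniquely as g = k a' n with k ∈ K, a' ∈ A_φ, n ∈ N, and H_φ = A_φ N is a closed solvable subgroup of G acting simply transitively on G/K. -/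
/-!
Since `φ(a) ∈ K`, rewriting `g = k a n` as `(k φ(a)⁻¹) (φ(a) a) n` turns the Iwasawa decomposition
into the twisted one. As `φ` centralizes `A` and normalizes `N`, `x ↦ φ(x) x` is a homomorphism into
the normalizer of `N`, so `H_φ = A_φ N` is a subgroup in which `N` is normal with abelian
quotient, hence solvable. It is the image of the graph of `φ` under the Iwasawa
homeomorphism, hence closed, and the twisted decomposition says that `K` and `H_φ` are
complements, which is simple transitivity of `H_φ` on `G/K`.
-/

open Function Subgroup Pointwise

section

variable {G : Type*} [Group G]

theorem Subgroup.isSolvable_sup_of_le_normalizer {H N : Subgroup G}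
    (hHN : H ≤ normalizer N) [Group.IsSolvable H] [Group.IsSolvable N] :
    Group.IsSolvable ↥(H ⊔ N) := by
  have := normal_subgroupOf_of_le_normalizer hHN
  have := normal_subgroupOf_sup_of_le_normalizer hHN
  have : Group.IsSolvable (↥(H ⊔ N) ⧸ N.subgroupOf (H ⊔ N)) :=
    Group.isSolvable_of_surjective
      (f := (QuotientGroup.quotientInfEquivProdNormalizerQuotient H N hHN).toMonoidHom)
      (MulEquiv.surjective _)
  refine Group.isSolvable_of_ker_le_range (inclusion (le_sup_right : N ≤ H ⊔ N))
    (QuotientGroup.mk' (N.subgroupOf (H ⊔ N))) fun x hx => ?_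
  rw [QuotientGroup.ker_mk', mem_subgroupOf] at hx
  exact ⟨⟨x, hx⟩, rfl⟩

theorem Subgroup.IsComplement'.existsUnique_smul_eq {H K : Subgroup G} (hHK : IsComplement' H K)
    (x y : G ⧸ K) : ∃! h : H, (h : G) • x = y := by
  rw [isComplement'_def, isComplement_subgroup_right_iff_existsUnique_quotientGroupMk] at hHK
  obtain ⟨⟨h₁, hh₁⟩, rfl, -⟩ := hHK x
  simp only [MulAction.Quotient.smul_mk, smul_eq_mul]
  exact (Equiv.mulRight (⟨h₁, hh₁⟩ : H)).existsUnique_congr_right.2 (hHK y)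

theorem isComplement_mul_of_bijective {S T U : Set G}
    (h : Bijective fun t : S × T × U => (t.1 : G) * t.2.1 * t.2.2) : IsComplement S (T * U) := by
  constructor
  · rintro ⟨s, _, t, ht, u, hu, rfl⟩ ⟨s', _, t', ht', u', hu', rfl⟩ heq
    have := @h.1 (s, ⟨t, ht⟩, ⟨u, hu⟩) (s', ⟨t', ht'⟩, ⟨u', hu'⟩) (by simpa [mul_assoc] using heq)
    simp only [Prod.mk.injEq, Subtype.mk.injEq] at this
    obtain ⟨rfl, rfl, rfl⟩ := this
    rfl
  · intro g
    obtain ⟨⟨s, t, u⟩, rfl⟩ := h.2 g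
    exact ⟨(s, ⟨t * u, Set.mul_mem_mul t.2 u.2⟩), (mul_assoc _ _ _).symm⟩

theorem bijective_mul_twisted {K : Subgroup G} {A N : Set G}
    (hKAN : Bijective fun t : K × A × N => (t.1 : G) * t.2.1 * t.2.2)
    (κ : A → G) (hκ : ∀ x, κ x ∈ K) :
    Bijective fun t : K × {h : G // ∃ x : A, h = κ x * x} × N => (t.1 : G) * t.2.1 * t.2.2 := by
  constructor
  · rintro ⟨k, ⟨_, x, rfl⟩, n⟩ ⟨k', ⟨_, y, rfl⟩, n'⟩ h
    have := @hKAN.1 (⟨k * κ x, mul_mem k.2 (hκ x)⟩, x, n) (⟨k' * κ y, mul_mem k'.2 (hκ y)⟩, y, n')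
      (by simpa [mul_assoc] using h)
    simp only [Prod.mk.injEq, Subtype.mk.injEq] at this
    obtain ⟨hk, rfl, rfl⟩ := this
    obtain rfl : k = k' := Subtype.ext (mul_right_cancel hk)
    rfl
  · intro g
    obtain ⟨⟨k, x, n⟩, rfl⟩ := hKAN.2 g
    exact ⟨(⟨k * (κ x)⁻¹, mul_mem k.2 (inv_mem (hκ x))⟩, ⟨κ x * x, x, rfl⟩, n), by simp [mul_assoc]⟩

theorem isClosed_setOf_twisted_mul [TopologicalSpace G] [T2Space G] {K : Subgroup G} {A N : Set G}
    (hKAN : IsClosedMap fun t : K × A × N => (t.1 : G) * t.2.1 * t.2.2)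
    (κ : A → G) (hκ : Continuous κ) (hκK : ∀ x, κ x ∈ K) :
    IsClosed {g : G | ∃ x : A, ∃ m ∈ N, g = κ x * x * m} := by
  have hgraph : IsClosed {t : K × A × N | (t.1 : G) = κ t.2.1} :=
    isClosed_eq (continuous_subtype_val.comp continuous_fst)
      (hκ.comp (continuous_fst.comp continuous_snd))
  convert hKAN _ hgraph using 1
  ext g
  constructor
  · rintro ⟨x, m, hm, rfl⟩
    exact ⟨(⟨κ x, hκK x⟩, x, ⟨m, hm⟩), rfl, rfl⟩
  · rintro ⟨⟨k, x, m⟩, hk, rfl⟩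
    exact ⟨x, m, m.2, by rw [← hk]⟩

def twistHom {A : Subgroup G} (φ : A →* G) (hφA : ∀ x y : A, φ x * (y : G) = y * φ x) :
    A →* G where
  toFun x := φ x * x
  map_one' := by simp
  map_mul' x y := by
    rw [map_mul, Subgroup.coe_mul, mul_assoc (φ x), ← mul_assoc (φ y), hφA y x]
    simp only [mul_assoc]

theorem range_twistHom_le_normalizer {A N : Subgroup G} (φ : A →* G)
    (hφA : ∀ x y : A, φ x * (y : G) = y * φ x)
    (hAN : A ≤ normalizer N) (hφN : φ.range ≤ normalizer N) :
    (twistHom φ hφA).range ≤ normalizer N := by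
  rintro _ ⟨x, rfl⟩
  exact mul_mem (hφN ⟨x, rfl⟩) (hAN x.2)

theorem coe_range_twistHom {A : Subgroup G} (φ : A →* G)
    (hφA : ∀ x y : A, φ x * (y : G) = y * φ x) :
    ((twistHom φ hφA).range : Set G) = {h | ∃ x : A, h = φ x * x} :=
  Set.ext fun _ => exists_congr fun _ => eq_comm

theorem setOf_twisted_mul_eq {ι : Type*} (κ a : ι → G) (N : Set G) :
    {h | ∃ x, h = κ x * a x} * N = {g | ∃ x, ∃ m ∈ N, g = κ x * a x * m} := by
  ext g
  constructor
  · rintro ⟨_, ⟨x, rfl⟩, m, hm, rfl⟩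
    exact ⟨x, m, hm, rfl⟩
  · rintro ⟨x, m, hm, rfl⟩
    exact ⟨_, ⟨x, rfl⟩, m, hm, rfl⟩

end

theorem modified_iwasawa_decomposition_general
    {G : Type*} [Group G] [TopologicalSpace G] [T2Space G]
    (K A N : Subgroup G)
    (hIwa : IsHomeomorph (fun t : K × A × N => (t.1 : G) * (t.2.1 : G) * (t.2.2 : G)))
    (hAab : ∀ x y : A, x * y = y * x)
    (hNsolv : IsSolvable N)
    (hAN : ∀ a ∈ A, ∀ m ∈ N, a * m * a⁻¹ ∈ N)
    (φ : A →* G) (hφcont : Continuous φ)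
    (hφK : ∀ x : A, φ x ∈ K)
    (hφA : ∀ x y : A, φ x * (y : G) = (y : G) * φ x)
    (hφN : ∀ x : A, ∀ m ∈ N, φ x * m * (φ x)⁻¹ ∈ N) :
    (∀ g : G, ∃! t : K × {h : G // ∃ x : A, h = φ x * x} × N,
        (t.1 : G) * (t.2.1 : G) * (t.2.2 : G) = g) ∧
    ∃ H : Subgroup G,
      (H : Set G) = {g | ∃ x : A, ∃ m ∈ N, g = (φ x * x) * m} ∧
      IsClosed (H : Set G) ∧
      IsSolvable H ∧
      ∀ x y : G ⧸ K, ∃! h : H, (h : G) • x = y := by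
  set ψ := twistHom φ hφA
  have hψN : ψ.range ≤ normalizer N := range_twistHom_le_normalizer φ hφA (le_normalizer_iff.2 hAN)
    (le_normalizer_iff.2 <| by rintro _ ⟨x, rfl⟩; exact hφN x)
  have hbij := bijective_mul_twisted hIwa.bijective φ hφK
  have hH : ((ψ.range ⊔ N : Subgroup G) : Set G) = {h | ∃ x : A, h = φ x * x} * N := by
    rw [coe_mul_of_left_le_normalizer_right _ _ hψN, coe_range_twistHom]
  have : Group.IsSolvable N := hNsolv
  have := Group.isSolvable_of_comm hAab
  have := Group.isSolvable_of_surjective ψ.rangeRestrict_surjective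
  refine ⟨(bijective_iff_existsUnique _).1 hbij, ψ.range ⊔ N, hH.trans (setOf_twisted_mul_eq _ _ _),
    ?_, isSolvable_sup_of_le_normalizer hψN, ?_⟩
  · rw [hH, setOf_twisted_mul_eq]
    exact isClosed_setOf_twisted_mul hIwa.isClosedMap φ hφcont hφK
  · have hKH : IsComplement' K (ψ.range ⊔ N) := by
      rw [isComplement'_def, hH]
      exact isComplement_mul_of_bijective hbij
    exact hKH.symm.existsUnique_smul_eq

/-- Let `G = KAN` be a (global) Iwasawa decomposition of a connected
semisimple Lie group and let `φ : A → K` be a homomorphism whose image centralizes `A`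
(i.e. lands in `M`).  Let `A_φ = {φ(x)·x : x ∈ A}`.  Then every `g ∈ G` factors uniquely as
`g = k·a'·n` with `k ∈ K`, `a' ∈ A_φ`, `n ∈ N`, and `H_φ = A_φ·N` is a closed solvable
subgroup of `G` acting simply transitively on `G/K`. -/
theorem modified_iwasawa_decomposition
    {G : Type*} [Group G] [TopologicalSpace G] [IsTopologicalGroup G] [T2Space G]
    (K A N : Subgroup G)
    (hIwa : IsHomeomorph (fun t : K × A × N => (t.1 : G) * (t.2.1 : G) * (t.2.2 : G)))
    (hAab : ∀ x y : A, x * y = y * x)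
    (hNsolv : IsSolvable N)
    (hAN : ∀ a ∈ A, ∀ m ∈ N, a * m * a⁻¹ ∈ N)
    (φ : A →* G) (hφcont : Continuous φ)
    (hφK : ∀ x : A, φ x ∈ K)
    (hφA : ∀ x y : A, φ x * (y : G) = (y : G) * φ x)
    (hφφ : ∀ x y : A, φ x * φ y = φ y * φ x)
    (hφN : ∀ x : A, ∀ m ∈ N, φ x * m * (φ x)⁻¹ ∈ N) :
    (∀ g : G, ∃! t : K × {h : G // ∃ x : A, h = φ x * x} × N,
        (t.1 : G) * (t.2.1 : G) * (t.2.2 : G) = g) ∧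
    ∃ H : Subgroup G,
      (H : Set G) = {g | ∃ x : A, ∃ m ∈ N, g = (φ x * x) * m} ∧
      IsClosed (H : Set G) ∧
      IsSolvable H ∧
      ∀ x y : G ⧸ K, ∃! h : H, (h : G) • x = y :=
  modified_iwasawa_decomposition_general K A N hIwa hAab hNsolv hAN φ hφcont hφK hφA hφN
end
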